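/- For every t ∈ [0,1] one has σ_loc²(2+t, 0) ≥ 2; equivalently, e^{−(3+3t)/8}/√(3+3t) ≥ e^{−(5+t)/8}/√(5+t) holds for all t ∈ [0,1], i.e. at x = 0 the Gaussian weight attached to the high-variance branch (value 3) dominates the weight attached to the low-variance branch (value 1) on the third time interval. -/

import Mathlib

/-! At `x = 0` the branch weights reduce to `e^{-v/8}/√v`, which decreases in the total
variance `v`; since `3 + 3t ≤ 5 + t` for `t ≤ 1`, the value-3 branch carries at least as much
weight as the value-1 branch, so the weighted average of `1` and `3` is at least `2`. -/

open Real Set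

/-- The Dupire local variance `σ_loc²(2+t,x)` of the mixing model on the third time
interval `(2,3]`, written explicitly and extended continuously to `t ∈ [0,1]`. -/
noncomputable def sigloc2Third (t x : ℝ) : ℝ :=
  (Real.exp (-(2 * x + 5 + t) ^ 2 / (8 * (5 + t))) / Real.sqrt (5 + t)
      + 3 * Real.exp (-(2 * x + 3 + 3 * t) ^ 2 / (8 * (3 + 3 * t))) / Real.sqrt (3 + 3 * t)) /
    (Real.exp (-(2 * x + 5 + t) ^ 2 / (8 * (5 + t))) / Real.sqrt (5 + t)
      + Real.exp (-(2 * x + 3 + 3 * t) ^ 2 / (8 * (3 + 3 * t))) / Real.sqrt (3 + 3 * t))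

noncomputable def gaussWeight (v x : ℝ) : ℝ :=
  exp (-(2 * x + v) ^ 2 / (8 * v)) / √v

lemma sigloc2Third_eq_gaussWeight (t x : ℝ) :
    sigloc2Third t x =
      (gaussWeight (5 + t) x + 3 * gaussWeight (3 + 3 * t) x) /
        (gaussWeight (5 + t) x + gaussWeight (3 + 3 * t) x) := by
  simp only [sigloc2Third, gaussWeight, mul_div_assoc, add_assoc]

lemma gaussWeight_zero (v : ℝ) : gaussWeight v 0 = exp (-v / 8) / √v := by
  rcases eq_or_ne v 0 with rfl | hv
  · simp [gaussWeight]
  · rw [gaussWeight]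
    congr 2
    field_simp
    ring

lemma gaussWeight_zero_pos {v : ℝ} (hv : 0 < v) : 0 < gaussWeight v 0 := by
  rw [gaussWeight_zero]
  exact div_pos (exp_pos _) (sqrt_pos.mpr hv)

lemma gaussWeight_zero_antitoneOn : AntitoneOn (gaussWeight · 0) (Ioi 0) := by
  intro u hu v _ huv
  simp only [gaussWeight_zero]
  exact div_le_div₀ (exp_pos _).le (exp_le_exp.mpr (by linarith)) (sqrt_pos.mpr hu)
    (sqrt_le_sqrt huv)

lemma two_le_mix_one_three {a b : ℝ} (hb : 0 ≤ b) (ha : 0 < a) (hba : b ≤ a) :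
    2 ≤ (b + 3 * a) / (b + a) := by
  rw [le_div_iff₀ (by linarith)]
  linarith

/-- For every `t ∈ [0,1]` one has `σ_loc²(2+t, 0) ≥ 2`; equivalently, at `x = 0` the
Gaussian weight attached to the high-variance branch dominates the one attached to the
low-variance branch: `e^{−(3+3t)/8}/√(3+3t) ≥ e^{−(5+t)/8}/√(5+t)`. -/
theorem sigloc2Third_ge_two_at_zero :
    ∀ t ∈ Set.Icc (0 : ℝ) 1,
      2 ≤ sigloc2Third t 0 ∧
      Real.exp (-(5 + t) / 8) / Real.sqrt (5 + t)
        ≤ Real.exp (-(3 + 3 * t) / 8) / Real.sqrt (3 + 3 * t) := by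
  rintro t ⟨ht0, ht1⟩
  have h3 : (0 : ℝ) < 3 + 3 * t := by linarith
  have h5 : (0 : ℝ) < 5 + t := by linarith
  have hweight : gaussWeight (5 + t) 0 ≤ gaussWeight (3 + 3 * t) 0 :=
    gaussWeight_zero_antitoneOn (mem_Ioi.mpr h3) (mem_Ioi.mpr h5) (by linarith)
  refine ⟨?_, by simpa only [gaussWeight_zero] using hweight⟩
  rw [sigloc2Third_eq_gaussWeight]
  exact two_le_mix_one_three (gaussWeight_zero_pos h5).le (gaussWeight_zero_pos h3) hweight
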